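/- Let N(x) := ∫_{-∞}^x (2π)^{-1/2} exp(−y²/2) dy be the standard normal distribution function. Fix r < 0, μ > 0 and T > 0, and define F(v) := N(−(r+μT)v/√T) − exp(−2μrv²)·N(−(r−μT)v/√T). Then for every σ̄ > 0 with σ̄ ≠ 1: F(1/|1−σ̄|) < F(1/(1+σ̄)). -/

import Mathlib

open MeasureTheory

/-- The standard normal density `n(x) = (2π)^{-1/2} exp(-x²/2)`. -/
noncomputable def stdGaussPDF (x : ℝ) : ℝ :=
  (Real.sqrt (2 * Real.pi))⁻¹ * Real.exp (-x ^ 2 / 2)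

/-- The standard normal distribution function `N(x) = ∫_{-∞}^x n(y) dy`. -/
noncomputable def stdGaussCDF (x : ℝ) : ℝ :=
  ∫ y in Set.Iic x, stdGaussPDF y

/-!
The function `F` is differentiable with
`F'(v) = -2μ√T · n(-(r+μT)v/√T) + 4μrv · exp(-2μrv²) · N(-(r-μT)v/√T)`:
the two density terms combine because `exp(-2μrv²) n(-(r-μT)v/√T) = n(-(r+μT)v/√T)`.
For `r < 0`, `μ > 0` and `v > 0` both summands are negative, so `F` is strictly decreasing on
`(0, ∞)`, and it remains to note that `0 < 1/(1+σ̄) < 1/|1-σ̄|`.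
-/

open Real Set

lemma stdGaussPDF_pos (x : ℝ) : 0 < stdGaussPDF x := by
  unfold stdGaussPDF
  positivity

lemma continuous_stdGaussPDF : Continuous stdGaussPDF := by
  unfold stdGaussPDF
  fun_prop

lemma integrable_stdGaussPDF : Integrable stdGaussPDF := by
  refine ((integrable_exp_neg_mul_sq (b := 1 / 2) (by norm_num)).const_mul
    (√(2 * π))⁻¹).congr (Filter.Eventually.of_forall fun x => ?_)
  simp only [stdGaussPDF]
  ring_nf

lemma stdGaussCDF_nonneg (x : ℝ) : 0 ≤ stdGaussCDF x :=
  setIntegral_nonneg measurableSet_Iic fun y _ => (stdGaussPDF_pos y).le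

lemma hasDerivAt_stdGaussCDF (x : ℝ) : HasDerivAt stdGaussCDF (stdGaussPDF x) x := by
  have hsplit : ∀ y, stdGaussCDF y = stdGaussCDF 0 + ∫ t in (0 : ℝ)..y, stdGaussPDF t := by
    intro y
    rw [stdGaussCDF, stdGaussCDF, ← intervalIntegral.integral_Iic_sub_Iic
      integrable_stdGaussPDF.integrableOn integrable_stdGaussPDF.integrableOn]
    ring
  rw [funext hsplit]
  exact (continuous_stdGaussPDF.integral_hasStrictDerivAt 0 x).hasDerivAt.const_add _

lemma exp_mul_stdGaussPDF (x y : ℝ) :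
    exp ((x ^ 2 - y ^ 2) / 2) * stdGaussPDF x = stdGaussPDF y := by
  rw [stdGaussPDF, stdGaussPDF, mul_left_comm, ← exp_add]
  ring_nf

lemma abs_one_sub_lt_one_add {σ : ℝ} (hσ : 0 < σ) : |1 - σ| < 1 + σ :=
  abs_lt.mpr ⟨by linarith, by linarith⟩

noncomputable def driftF (r μ T v : ℝ) : ℝ :=
  stdGaussCDF (-(r + μ * T) * v / √T)
    - exp (-2 * μ * r * v ^ 2) * stdGaussCDF (-(r - μ * T) * v / √T)

lemma hasDerivAt_driftF {T : ℝ} (hT : 0 < T) (r μ v : ℝ) :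
    HasDerivAt (driftF r μ T)
      (-(2 * μ * √T) * stdGaussPDF (-(r + μ * T) * v / √T)
        + 4 * μ * r * v * exp (-2 * μ * r * v ^ 2) * stdGaussCDF (-(r - μ * T) * v / √T)) v := by
  have hlin : ∀ c : ℝ, HasDerivAt (fun v : ℝ => c * v / √T) (c / √T) v := fun c => by
    simpa using ((hasDerivAt_id v).const_mul c).div_const (√T)
  have hexp : HasDerivAt (fun v : ℝ => exp (-2 * μ * r * v ^ 2))
      (exp (-2 * μ * r * v ^ 2) * (-2 * μ * r * (2 * v))) v := by
    simpa using ((hasDerivAt_pow 2 v).const_mul (-2 * μ * r)).exp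
  have hF := ((hasDerivAt_stdGaussCDF _).comp v (hlin (-(r + μ * T)))).sub
    (hexp.mul ((hasDerivAt_stdGaussCDF _).comp v (hlin (-(r - μ * T)))))
  refine hF.congr_deriv ?_
  have hdens := exp_mul_stdGaussPDF (-(r - μ * T) * v / √T) (-(r + μ * T) * v / √T)
  have hexponent : ((-(r - μ * T) * v / √T) ^ 2 - (-(r + μ * T) * v / √T) ^ 2) / 2
      = -2 * μ * r * v ^ 2 := by
    field_simp
    rw [sq_sqrt hT.le]
    ring
  rw [hexponent] at hdens
  simp only [Function.comp_apply]
  linear_combination ((r - μ * T) / √T) * hdens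
    - 2 * μ * stdGaussPDF (-(r + μ * T) * v / √T) * div_sqrt (x := T)

lemma strictAntiOn_driftF {r μ T : ℝ} (hr : r < 0) (hμ : 0 < μ) (hT : 0 < T) :
    StrictAntiOn (driftF r μ T) (Ioi 0) := by
  refine strictAntiOn_of_hasDerivWithinAt_neg (convex_Ioi 0)
    (fun v _ => (hasDerivAt_driftF hT r μ v).continuousAt.continuousWithinAt)
    (fun v _ => (hasDerivAt_driftF hT r μ v).hasDerivWithinAt) fun v hv => ?_
  rw [interior_Ioi, mem_Ioi] at hv
  have hdensity : -(2 * μ * √T) * stdGaussPDF (-(r + μ * T) * v / √T) < 0 :=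
    mul_neg_of_neg_of_pos (by nlinarith [sqrt_pos.mpr hT]) (stdGaussPDF_pos _)
  have hbarrier : 4 * μ * r * v * exp (-2 * μ * r * v ^ 2) * stdGaussCDF (-(r - μ * T) * v / √T)
      ≤ 0 :=
    mul_nonpos_of_nonpos_of_nonneg
      (mul_nonpos_of_nonpos_of_nonneg (by nlinarith [mul_pos hμ hv]) (exp_pos _).le)
      (stdGaussCDF_nonneg _)
  linarith

/-- with `r < 0`, `μ > 0`, `T > 0` and
`F(v) = N(−(r+μT)v/√T) − exp(−2μrv²) N(−(r−μT)v/√T)`, for every `σ̄ > 0` with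
`σ̄ ≠ 1` one has `F(1/|1−σ̄|) < F(1/(1+σ̄))`. -/
theorem stmt_13 (r μ T : ℝ) (hr : r < 0) (hμ : 0 < μ) (hT : 0 < T) (F : ℝ → ℝ)
    (hF : ∀ v, F v =
      stdGaussCDF (-(r + μ * T) * v / Real.sqrt T)
        - Real.exp (-2 * μ * r * v ^ 2) * stdGaussCDF (-(r - μ * T) * v / Real.sqrt T)) :
    ∀ σ : ℝ, 0 < σ → σ ≠ 1 → F (1 / |1 - σ|) < F (1 / (1 + σ)) := by
  intro σ hσ hσ1
  obtain rfl : F = driftF r μ T := funext hF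
  have habs : 0 < |1 - σ| := abs_pos.mpr (sub_ne_zero.mpr hσ1.symm)
  exact strictAntiOn_driftF hr hμ hT (mem_Ioi.mpr (by positivity)) (mem_Ioi.mpr (by positivity))
    (one_div_lt_one_div_of_lt habs (abs_one_sub_lt_one_add hσ))
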